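/- arXiv:2508.09738 — 2 statements merged into one kernel-verified Lean document; each statement's English description precedes it below -/
import Mathlib

section
/- Assume ε·λ_max(L_s + D_ω) < 2, and define Ē(U) := (1/2)·trace(Uᵀ L_s U) + (1/2)·Σ_{i=1}^n ω_i‖û_i − u_i‖². Then the penalized problem over Σ and the binary problem over Σ̄ have the same global minimizers: {U ∈ Σ : E(U) ≤ E(V) for all V ∈ Σ} = {U ∈ Σ̄ : Ē(U) ≤ Ē(V) for all V ∈ Σ̄}. -/
/-!
Under `ε λ_max(L_s + D_ω) < 2` the energy `E` is strictly concave on all of `ℝ^{n×K}`: along a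
line `U + sW` it is a quadratic in `s` whose leading coefficient
`½ tr(Wᵀ(L_s + D_ω)W) - ‖W‖²/ε` is at most `(λ_max/2 - 1/ε)‖W‖² < 0`.
Since `Σ` is the convex hull of `Σ̄`, the concave `E` attains its minimum over `Σ` on `Σ̄`, and
being strictly concave it is minimized only at extreme points of `Σ`, which lie in `Σ̄`. On `Σ̄`
the penalty vanishes, so `E = Ē` there.
-/

open Matrix

noncomputable section

/-- The unit simplex `Δ` in `ℝ^K`. -/
def unitSimplex (K : ℕ) : Set (Fin K → ℝ) :=
  {y | (∀ j, 0 ≤ y j) ∧ ∑ j, y j = 1}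

/-- `Σ`: matrices in `ℝ^{n×K}` each of whose rows lies in the unit simplex. -/
def SigmaSet (n K : ℕ) : Set (Matrix (Fin n) (Fin K) ℝ) :=
  {U | ∀ i, U i ∈ unitSimplex K}

/-- `Σ̄`: binary matrices in `Σ`. -/
def SigmaBar (n K : ℕ) : Set (Matrix (Fin n) (Fin K) ℝ) :=
  {U | U ∈ SigmaSet n K ∧ ∀ i j, U i j = 0 ∨ U i j = 1}

/-- Frobenius inner product `⟨A,B⟩ = trace(AᵀB)`. -/
def frobInner {n K : ℕ} (A B : Matrix (Fin n) (Fin K) ℝ) : ℝ :=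
  Matrix.trace (Aᵀ * B)

/-- Frobenius norm. -/
def frobNorm {n K : ℕ} (A : Matrix (Fin n) (Fin K) ℝ) : ℝ :=
  Real.sqrt (∑ i, ∑ j, (A i j) ^ 2)

/-- The energy
`E(U) = (1/2)·trace(Uᵀ Lₛ U) + (1/ε)·Σᵢ uᵢᵀ(𝟙 − uᵢ) + (1/2)·Σᵢ ωᵢ‖ûᵢ − uᵢ‖²`. -/
def En {n K : ℕ} (Ls : Matrix (Fin n) (Fin n) ℝ) (ω : Fin n → ℝ)
    (Uhat : Matrix (Fin n) (Fin K) ℝ) (ε : ℝ) (U : Matrix (Fin n) (Fin K) ℝ) : ℝ :=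
  (1 / 2) * Matrix.trace (Uᵀ * Ls * U)
    + (1 / ε) * ∑ i, ∑ j, U i j * (1 - U i j)
    + (1 / 2) * ∑ i, ω i * ∑ j, (Uhat i j - U i j) ^ 2

/-- The gradient `∇E(U) = Lₛ U + (1/ε)(J − 2U) − D_ω(Û − U)` (`J` the all-ones matrix). -/
def gradE {n K : ℕ} (Ls : Matrix (Fin n) (Fin n) ℝ) (ω : Fin n → ℝ)
    (Uhat : Matrix (Fin n) (Fin K) ℝ) (ε : ℝ) (U : Matrix (Fin n) (Fin K) ℝ) :
    Matrix (Fin n) (Fin K) ℝ :=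
  Ls * U + (1 / ε) • (Matrix.of (fun _ _ => (1 : ℝ)) - 2 • U)
    - Matrix.diagonal ω * (Uhat - U)


/-- The unpenalized energy `Ē(U) = (1/2)·trace(Uᵀ Lₛ U) + (1/2)·Σᵢ ωᵢ‖ûᵢ − uᵢ‖²`. -/
def Ebar {n K : ℕ} (Ls : Matrix (Fin n) (Fin n) ℝ) (ω : Fin n → ℝ)
    (Uhat : Matrix (Fin n) (Fin K) ℝ) (U : Matrix (Fin n) (Fin K) ℝ) : ℝ :=
  (1 / 2) * Matrix.trace (Uᵀ * Ls * U)
    + (1 / 2) * ∑ i, ω i * ∑ j, (Uhat i j - U i j) ^ 2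

open Set

section Convexity

variable {𝕜 E : Type*} [Field 𝕜] [LinearOrder 𝕜] [IsStrictOrderedRing 𝕜]
  [AddCommGroup E] [Module 𝕜 E]

theorem strictConcaveOn_univ_of_add_smul_eq {f : E → 𝕜} (q : E → 𝕜)
    (hf : ∀ x w, ∃ l, ∀ s : 𝕜, f (x + s • w) = f x + s * l + s ^ 2 * q w)
    (hq : ∀ w ≠ 0, q w < 0) : StrictConcaveOn 𝕜 univ f := by
  refine ⟨convex_univ, fun x _ y _ hxy a b ha hb hab => ?_⟩
  obtain rfl : a = 1 - b := eq_sub_of_add_eq hab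
  obtain ⟨l, hl⟩ := hf x (y - x)
  have hy : f y = f x + l + q (y - x) := by simpa using hl 1
  have hseg : (1 - b) • x + b • y = x + b • (y - x) := by
    rw [sub_smul, one_smul, smul_sub]; abel
  have hneg : (1 - b) * b * q (y - x) < 0 :=
    mul_neg_of_pos_of_neg (mul_pos ha hb) (hq _ (sub_ne_zero.2 hxy.symm))
  rw [hseg, hl, hy, smul_eq_mul, smul_eq_mul]
  linarith

theorem StrictConcaveOn.mem_extremePoints_of_isMinOn {s : Set E} {f : E → 𝕜} {x : E}
    (hf : StrictConcaveOn 𝕜 s f) (hx : x ∈ s) (hmin : IsMinOn f s x) :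
    x ∈ s.extremePoints 𝕜 := by
  refine ⟨hx, fun x₁ hx₁ x₂ hx₂ hseg => ?_⟩
  rcases eq_or_ne x₁ x₂ with rfl | hne
  · rw [openSegment_same] at hseg
    exact hseg.symm
  · exact absurd (hf.lt_on_openSegment hx₁ hx₂ hne hseg)
      (not_lt.2 (le_min (isMinOn_iff.1 hmin x₁ hx₁) (isMinOn_iff.1 hmin x₂ hx₂)))

theorem StrictConcaveOn.minimizers_convexHull_eq {S : Set E} {f : E → 𝕜}
    (hf : StrictConcaveOn 𝕜 (convexHull 𝕜 S) f) :
    {x ∈ convexHull 𝕜 S | ∀ y ∈ convexHull 𝕜 S, f x ≤ f y} = {x ∈ S | ∀ y ∈ S, f x ≤ f y} := by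
  ext x
  constructor
  · rintro ⟨hx, hmin⟩
    have hext := hf.mem_extremePoints_of_isMinOn hx (isMinOn_iff.2 hmin)
    exact ⟨extremePoints_convexHull_subset hext, fun y hy => hmin y (subset_convexHull 𝕜 S hy)⟩
  · rintro ⟨hx, hmin⟩
    refine ⟨subset_convexHull 𝕜 S hx, fun y hy => ?_⟩
    obtain ⟨z, hz, hzy⟩ := hf.concaveOn.exists_le_of_mem_convexHull (subset_convexHull 𝕜 S) hy
    exact (hmin z hz).trans hzy

end Convexity

theorem Matrix.IsHermitian.posSemidef_smul_one_sub {n : Type*} [Fintype n] [DecidableEq n]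
    {M : Matrix n n ℝ} (hM : M.IsHermitian) {lam : ℝ} (h : ∀ i, hM.eigenvalues i ≤ lam) :
    (lam • 1 - M).PosSemidef := by
  refine posSemidef_iff_isHermitian_and_spectrum_nonneg.2
    ⟨(isHermitian_one.smul (IsSelfAdjoint.all lam)).sub hM, ?_⟩
  rw [← Algebra.algebraMap_eq_smul_one, ← spectrum.singleton_sub_eq,
      hM.spectrum_real_eq_range_eigenvalues]
  rintro _ ⟨_, rfl, _, ⟨i, rfl⟩, rfl⟩
  exact sub_nonneg.2 (h i)

theorem Matrix.IsHermitian.trace_transpose_mul_mul_le {n m : Type*} [Fintype n] [Fintype m]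
    [DecidableEq n] {M : Matrix n n ℝ} (hM : M.IsHermitian) {lam : ℝ}
    (h : ∀ i, hM.eigenvalues i ≤ lam) (W : Matrix n m ℝ) :
    (Wᵀ * M * W).trace ≤ lam * (Wᵀ * W).trace := by
  have := ((hM.posSemidef_smul_one_sub h).conjTranspose_mul_mul_same W).trace_nonneg
  rw [conjTranspose_eq_transpose_of_trivial, Matrix.mul_sub, Matrix.sub_mul, trace_sub,
    Matrix.mul_smul, Matrix.smul_mul, Matrix.mul_one, trace_smul, smul_eq_mul] at this
  linarith

theorem Matrix.trace_transpose_mul_self_pos {n m : Type*} [Fintype n] [Fintype m]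
    {W : Matrix n m ℝ} (hW : W ≠ 0) : 0 < (Wᵀ * W).trace := by
  rw [← conjTranspose_eq_transpose_of_trivial]
  exact (posSemidef_conjTranspose_mul_self W).trace_nonneg.lt_of_ne'
    (trace_conjTranspose_mul_self_eq_zero_iff.not.2 hW)

theorem sigmaSet_eq_convexHull_sigmaBar (n K : ℕ) :
    SigmaSet n K = convexHull ℝ (SigmaBar n K) := by
  have hpi : SigmaSet n K =
      univ.pi fun _ => convexHull ℝ (range fun j : Fin K => Pi.single j (1 : ℝ)) := by
    rw [convexHull_rangle_single_eq_stdSimplex]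
    ext U
    exact ⟨fun h i _ => h i, fun h i => h i (mem_univ i)⟩
  refine Subset.antisymm ?_ (convexHull_min (fun U hU => hU.1) ?_)
  · rw [hpi, ← convexHull_pi]
    refine convexHull_mono fun U hU => ⟨fun i => ?_, fun i j => ?_⟩ <;>
      obtain ⟨k, hk⟩ := hU i (mem_univ i) <;> rw [← hk]
    · exact single_mem_stdSimplex ℝ k
    · by_cases hjk : j = k <;> simp [hjk]
  · rw [hpi]; exact convex_pi fun _ _ => convex_convexHull ℝ _

section Energy

variable {n K : ℕ} (Ls : Matrix (Fin n) (Fin n) ℝ) (ω : Fin n → ℝ)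
  (Uhat : Matrix (Fin n) (Fin K) ℝ) {ε : ℝ}

theorem En_eq_trace (U : Matrix (Fin n) (Fin K) ℝ) :
    En Ls ω Uhat ε U = (1 / 2) * (Uᵀ * Ls * U).trace
      + (1 / ε) * (Uᵀ * (Matrix.of fun _ _ => 1 : Matrix (Fin n) (Fin K) ℝ) - Uᵀ * U).trace
      + (1 / 2) * ((Uhat - U)ᵀ * Matrix.diagonal ω * (Uhat - U)).trace := by
  simp only [En, Matrix.trace, Matrix.diag, Matrix.mul_apply, Matrix.transpose_apply,
    Matrix.sub_apply, Matrix.of_apply, Matrix.diagonal_apply, mul_ite, mul_zero,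
    Finset.sum_ite_eq', Finset.mem_univ, if_true, ← Finset.sum_sub_distrib, ← mul_sub]
  rw [Finset.sum_comm (f := fun i j => U i j * (1 - U i j))]
  congr 2
  rw [Finset.sum_comm]
  simp only [Finset.mul_sum, sq]
  exact Finset.sum_congr rfl fun _ _ => Finset.sum_congr rfl fun _ _ => by ring

theorem En_add_smul_eq (U W : Matrix (Fin n) (Fin K) ℝ) :
    ∃ l, ∀ s : ℝ, En Ls ω Uhat ε (U + s • W) = En Ls ω Uhat ε U + s * l
      + s ^ 2 * ((1 / 2) * (Wᵀ * (Ls + Matrix.diagonal ω) * W).trace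
        - (1 / ε) * (Wᵀ * W).trace) := by
  refine ⟨(1 / 2) * ((Wᵀ * Ls * U).trace + (Uᵀ * Ls * W).trace)
      + (1 / ε) * ((Wᵀ * (Matrix.of fun _ _ => 1 : Matrix (Fin n) (Fin K) ℝ)).trace
        - (Wᵀ * U).trace - (Uᵀ * W).trace)
      - (1 / 2) * ((Wᵀ * Matrix.diagonal ω * (Uhat - U)).trace
        + ((Uhat - U)ᵀ * Matrix.diagonal ω * W).trace), fun s => ?_⟩
  simp only [En_eq_trace, Matrix.transpose_add, Matrix.transpose_sub, Matrix.transpose_smul,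
    Matrix.add_mul, Matrix.mul_add, Matrix.sub_mul, Matrix.mul_sub, Matrix.smul_mul,
    Matrix.mul_smul, Matrix.trace_add, Matrix.trace_sub, Matrix.trace_smul, smul_eq_mul]
  ring

theorem strictConcaveOn_En (hε : 0 < ε) (hH : (Ls + Matrix.diagonal ω).IsHermitian) {lam : ℝ}
    (hlam : ∀ i, hH.eigenvalues i ≤ lam) (hsmall : ε * lam < 2) :
    StrictConcaveOn ℝ univ (En Ls ω Uhat ε) := by
  refine strictConcaveOn_univ_of_add_smul_eq _ (En_add_smul_eq Ls ω Uhat) fun W hW => ?_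
  have hnorm := Matrix.trace_transpose_mul_self_pos hW
  have hrayleigh := hH.trace_transpose_mul_mul_le hlam W
  have hcoef : lam / 2 - 1 / ε < 0 := by
    rw [sub_neg, div_lt_div_iff₀ two_pos hε]
    linarith
  linarith [mul_neg_of_neg_of_pos hcoef hnorm]

theorem En_eq_Ebar {U : Matrix (Fin n) (Fin K) ℝ} (hU : U ∈ SigmaBar n K) :
    En Ls ω Uhat ε U = Ebar Ls ω Uhat U := by
  have hpenalty : ∑ i, ∑ j, U i j * (1 - U i j) = 0 :=
    Finset.sum_eq_zero fun i _ => Finset.sum_eq_zero fun j _ => by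
      rcases hU.2 i j with h | h <;> rw [h] <;> ring
  rw [En, Ebar, hpenalty, mul_zero, add_zero]

end Energy

theorem global_minimizers_eq_general (n K : ℕ)
    (Ls : Matrix (Fin n) (Fin n) ℝ)
    (ω : Fin n → ℝ)
    (Uhat : Matrix (Fin n) (Fin K) ℝ)
    (ε : ℝ) (hε : 0 < ε)
    (hH : (Ls + Matrix.diagonal ω).IsHermitian)
    (lam : ℝ) (hlam : IsGreatest (Set.range hH.eigenvalues) lam)
    (hsmall : ε * lam < 2) :
    {U ∈ SigmaSet n K | ∀ V ∈ SigmaSet n K, En Ls ω Uhat ε U ≤ En Ls ω Uhat ε V}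
      = {U ∈ SigmaBar n K | ∀ V ∈ SigmaBar n K, Ebar Ls ω Uhat U ≤ Ebar Ls ω Uhat V} := by
  have hconcave := (strictConcaveOn_En Ls ω Uhat hε hH (fun i => hlam.2 ⟨i, rfl⟩) hsmall).subset
    (subset_univ (convexHull ℝ (SigmaBar n K))) (convex_convexHull ℝ _)
  rw [sigmaSet_eq_convexHull_sigmaBar, hconcave.minimizers_convexHull_eq]
  ext U
  exact and_congr_right fun hU => forall₂_congr fun V hV => by
    rw [En_eq_Ebar Ls ω Uhat hU, En_eq_Ebar Ls ω Uhat hV]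

/-- if `ε·λ_max(Lₛ + D_ω) < 2` then the penalized problem over `Σ` and the
binary problem over `Σ̄` have the same global minimizers. -/
theorem global_minimizers_eq (n K : ℕ) (hn : 1 ≤ n) (hK : 2 ≤ K)
    (Ls : Matrix (Fin n) (Fin n) ℝ) (hLs : Ls.PosSemidef)
    (ω : Fin n → ℝ) (hω : ∀ i, 0 ≤ ω i)
    (Uhat : Matrix (Fin n) (Fin K) ℝ) (hUhat : Uhat ∈ SigmaSet n K)
    (ε : ℝ) (hε : 0 < ε)
    (hH : (Ls + Matrix.diagonal ω).IsHermitian)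
    (lam : ℝ) (hlam : IsGreatest (Set.range hH.eigenvalues) lam)
    (hsmall : ε * lam < 2) :
    {U ∈ SigmaSet n K | ∀ V ∈ SigmaSet n K, En Ls ω Uhat ε U ≤ En Ls ω Uhat ε V}
      = {U ∈ SigmaBar n K | ∀ V ∈ SigmaBar n K, Ebar Ls ω Uhat U ≤ Ebar Ls ω Uhat V} :=
  global_minimizers_eq_general n K Ls ω Uhat ε hε hH lam hlam hsmall
end
end

section
/- Let L > 0 be such that ∇E is L-Lipschitz with respect to the Frobenius norm, and let ρ ∈ (0,1]. Let T ≥ 1 and let U_0, …, U_T ∈ Σ and S_0, …, S_{T−1} ∈ Σ be such that for every k with 0 ≤ k ≤ T−1: D_k := S_k − U_k ≠ 0; g_k := −⟨∇E(U_k), D_k⟩ ≥ 0; U_{k+1} = U_k + α_k·D_k for some α_k ∈ [0,1] with α_k ≥ ᾱ_k := min(1, g_k/(L‖D_k‖_F²)); and E(U_k) − E(U_{k+1}) ≥ ρ·ᾱ_k·g_k. Let E* := min_{U∈Σ} E(U) (which exists since E is continuous and Σ is compact). Then min_{0≤k≤T−1} g_k ≤ max( √(2n·L·(E(U_0) − E*)/(ρ·T)),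 2(E(U_0) − E*)/T ). -/
/-!
Let `M` be the smallest Frank–Wolfe gap. Every step decreases `E` by at least
`min (ρ M² / (2nL)) (M / 2)`: a short step (`ᾱ < 1`) by the sufficient-decrease condition, since
`‖S - U‖² ≤ 2n` for `S, U ∈ Σ`; a full step (`ᾱ = 1`, i.e. `g ≥ L‖S - U‖²`) by the
descent lemma `E(U + D) ≤ E(U) + ⟨∇E(U), D⟩ + L/2 ‖D‖²`. Summing over the `T` steps gives
`T · min (ρ M² / (2nL)) (M / 2) ≤ E(U₀) - E*`, which is solved for `M`.
-/

open Matrix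

noncomputable section

lemma le_one_of_mem_unitSimplex {K : ℕ} {x : Fin K → ℝ} (hx : x ∈ unitSimplex K) (j : Fin K) :
    x j ≤ 1 :=
  hx.2 ▸ Finset.single_le_sum (fun j _ => hx.1 j) (Finset.mem_univ j)

lemma sum_sq_sub_le_two_of_mem_unitSimplex {K : ℕ} {x y : Fin K → ℝ}
    (hx : x ∈ unitSimplex K) (hy : y ∈ unitSimplex K) : ∑ j, (x j - y j) ^ 2 ≤ 2 := by
  have hentry : ∀ j, (x j - y j) ^ 2 ≤ x j + y j := fun j => by
    nlinarith [hx.1 j, hy.1 j, le_one_of_mem_unitSimplex hx j, le_one_of_mem_unitSimplex hy j,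
      mul_nonneg (hx.1 j) (hy.1 j)]
  calc ∑ j, (x j - y j) ^ 2 ≤ ∑ j, (x j + y j) := Finset.sum_le_sum fun j _ => hentry j
    _ = 2 := by rw [Finset.sum_add_distrib, hx.2, hy.2]; norm_num

section Frobenius

variable {n K : ℕ}

lemma frobInner_eq_sum (A B : Matrix (Fin n) (Fin K) ℝ) :
    frobInner A B = ∑ i, ∑ j, A i j * B i j := by
  simp only [frobInner, Matrix.trace, Matrix.diag, Matrix.mul_apply, Matrix.transpose_apply]
  exact Finset.sum_comm

lemma frobInner_le_frobNorm_mul_frobNorm (A B : Matrix (Fin n) (Fin K) ℝ) :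
    frobInner A B ≤ frobNorm A * frobNorm B := by
  simpa only [frobInner_eq_sum, frobNorm, Fintype.sum_prod_type] using
    Real.sum_mul_le_sqrt_mul_sqrt Finset.univ (fun p : Fin n × Fin K => A p.1 p.2)
      (fun p => B p.1 p.2)

lemma frobNorm_sq (A : Matrix (Fin n) (Fin K) ℝ) :
    frobNorm A ^ 2 = ∑ i, ∑ j, A i j ^ 2 :=
  Real.sq_sqrt (by positivity)

lemma frobNorm_pos {A : Matrix (Fin n) (Fin K) ℝ} (hA : A ≠ 0) : 0 < frobNorm A := by
  obtain ⟨i, j, hij⟩ : ∃ i j, A i j ≠ 0 := by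
    by_contra! h
    exact hA (Matrix.ext h)
  have hsq : 0 < A i j ^ 2 := by positivity
  exact Real.sqrt_pos.2 <| hsq.trans_le <|
    (Finset.single_le_sum (fun j _ => sq_nonneg (A i j)) (Finset.mem_univ j)).trans
      (Finset.single_le_sum (f := fun i => ∑ j, A i j ^ 2) (fun i _ => by positivity)
        (Finset.mem_univ i))


lemma frobNorm_sub_sq_le {A B : Matrix (Fin n) (Fin K) ℝ}
    (hA : A ∈ SigmaSet n K) (hB : B ∈ SigmaSet n K) : frobNorm (A - B) ^ 2 ≤ 2 * n := by
  rw [frobNorm_sq]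
  calc ∑ i, ∑ j, (A - B) i j ^ 2 ≤ ∑ _i : Fin n, (2 : ℝ) :=
        Finset.sum_le_sum fun i _ => sum_sq_sub_le_two_of_mem_unitSimplex (hA i) (hB i)
    _ = 2 * n := by simp [mul_comm]

end Frobenius

section Energy

variable {n K : ℕ} {Ls : Matrix (Fin n) (Fin n) ℝ} {ω : Fin n → ℝ}
  {Uhat : Matrix (Fin n) (Fin K) ℝ} {ε L : ℝ}

lemma frobInner_mul_comm_of_transpose_eq (hLs : Lsᵀ = Ls) (A B : Matrix (Fin n) (Fin K) ℝ) :
    frobInner A (Ls * B) = frobInner B (Ls * A) := by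
  unfold frobInner
  rw [← Matrix.trace_transpose, Matrix.transpose_mul, Matrix.transpose_mul, Matrix.mul_assoc,
    Matrix.transpose_transpose, hLs]

/-- `E` is quadratic, so its second-order Taylor expansion is exact. -/
lemma En_add (hLs : Lsᵀ = Ls) (U D : Matrix (Fin n) (Fin K) ℝ) :
    En Ls ω Uhat ε (U + D) = En Ls ω Uhat ε U + frobInner (gradE Ls ω Uhat ε U) D
      + (1 / 2) * frobInner (gradE Ls ω Uhat ε (U + D) - gradE Ls ω Uhat ε U) D := by
  have hswap := frobInner_mul_comm_of_transpose_eq hLs U D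
  have htrace : ∀ X : Matrix (Fin n) (Fin K) ℝ, Matrix.trace (Xᵀ * Ls * X) = frobInner X (Ls * X) :=
    fun X => by rw [Matrix.mul_assoc]; rfl
  -- entrywise the two sides differ by `½ (U (Ls D) - D (Ls U))`, whose sum vanishes as `Ls` is
  -- symmetric
  rw [← sub_eq_zero, show (0 : ℝ) = (1 / 2) * (frobInner U (Ls * D) - frobInner D (Ls * U)) by
    rw [hswap, sub_self, mul_zero]]
  simp only [En, htrace]
  simp only [gradE, frobInner_eq_sum, nsmul_eq_mul, Matrix.mul_add, Matrix.add_apply,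
    Matrix.sub_apply, Matrix.smul_apply, Matrix.of_apply, Matrix.diagonal_mul, smul_eq_mul,
    Finset.mul_sum, ← Finset.sum_sub_distrib, ← Finset.sum_add_distrib]
  refine Finset.sum_congr rfl fun i _ => Finset.sum_congr rfl fun j _ => ?_
  ring

lemma En_add_le (hLs : Lsᵀ = Ls)
    (hlip : ∀ Ubar U : Matrix (Fin n) (Fin K) ℝ,
      frobNorm (gradE Ls ω Uhat ε Ubar - gradE Ls ω Uhat ε U) ≤ L * frobNorm (Ubar - U))
    (U D : Matrix (Fin n) (Fin K) ℝ) :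
    En Ls ω Uhat ε (U + D)
      ≤ En Ls ω Uhat ε U + frobInner (gradE Ls ω Uhat ε U) D + L / 2 * frobNorm D ^ 2 := by
  have hcurv : frobInner (gradE Ls ω Uhat ε (U + D) - gradE Ls ω Uhat ε U) D ≤ L * frobNorm D ^ 2 :=
    calc _ ≤ frobNorm (gradE Ls ω Uhat ε (U + D) - gradE Ls ω Uhat ε U) * frobNorm D :=
          frobInner_le_frobNorm_mul_frobNorm _ _
      _ ≤ L * frobNorm (U + D - U) * frobNorm D := by gcongr; exacts [Real.sqrt_nonneg _, hlip _ _]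
      _ = L * frobNorm D ^ 2 := by rw [add_sub_cancel_left]; ring
  rw [En_add hLs]
  linarith

lemma min_le_En_sub_En_step (hLs : Lsᵀ = Ls) (hL : 0 < L)
    (hlip : ∀ Ubar U : Matrix (Fin n) (Fin K) ℝ,
      frobNorm (gradE Ls ω Uhat ε Ubar - gradE Ls ω Uhat ε U) ≤ L * frobNorm (Ubar - U))
    {U S : Matrix (Fin n) (Fin K) ℝ} {ρ M g α : ℝ}
    (hU : U ∈ SigmaSet n K) (hS : S ∈ SigmaSet n K) (hD : S - U ≠ 0)
    (hg : g = -frobInner (gradE Ls ω Uhat ε U) (S - U)) (hM : 0 ≤ M) (hMg : M ≤ g)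
    (hρ : 0 ≤ ρ) (hα : α ≤ 1) (hαlb : min 1 (g / (L * frobNorm (S - U) ^ 2)) ≤ α)
    (hdec : ρ * min 1 (g / (L * frobNorm (S - U) ^ 2)) * g
      ≤ En Ls ω Uhat ε U - En Ls ω Uhat ε (U + α • (S - U))) :
    min (ρ * M ^ 2 / (2 * n * L)) (M / 2)
      ≤ En Ls ω Uhat ε U - En Ls ω Uhat ε (U + α • (S - U)) := by
  have hLd : 0 < L * frobNorm (S - U) ^ 2 := by have := frobNorm_pos hD; positivity
  have hd : frobNorm (S - U) ^ 2 ≤ 2 * n := frobNorm_sub_sq_le hS hU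
  rcases le_or_gt (g / (L * frobNorm (S - U) ^ 2)) 1 with hshort | hfull
  · rw [min_eq_right hshort] at hdec
    calc min (ρ * M ^ 2 / (2 * n * L)) (M / 2) ≤ ρ * M ^ 2 / (2 * n * L) := min_le_left _ _
      _ ≤ ρ * g ^ 2 / (L * frobNorm (S - U) ^ 2) :=
          div_le_div₀ (by positivity) (mul_le_mul_of_nonneg_left (pow_le_pow_left₀ hM hMg 2) hρ)
            hLd (by nlinarith)
      _ = ρ * (g / (L * frobNorm (S - U) ^ 2)) * g := by ring
      _ ≤ _ := hdec
  · rw [min_eq_left hfull.le] at hαlb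
    have hgL : L * frobNorm (S - U) ^ 2 < g := (one_lt_div hLd).1 hfull
    have hdescent := En_add_le hLs hlip U (S - U)
    rw [le_antisymm hα hαlb, one_smul]
    refine (min_le_right _ _).trans ?_
    linarith

end Energy

lemma le_max_sqrt_of_mul_min_le {M a b T Δ : ℝ} (ha : 0 < a) (hb : 0 < b) (hT : 0 < T)
    (h : T * min (a * M ^ 2 / b) (M / 2) ≤ Δ) :
    M ≤ max (√(b * Δ / (a * T))) (2 * Δ / T) := by
  rcases min_cases (a * M ^ 2 / b) (M / 2) with ⟨hmin, -⟩ | ⟨hmin, -⟩ <;> rw [hmin] at h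
  · refine le_max_of_le_left ((le_abs_self M).trans (Real.abs_le_sqrt ?_))
    rw [le_div_iff₀ (by positivity)]
    have := mul_le_mul_of_nonneg_left h hb.le
    field_simp at this
    linarith
  · refine le_max_of_le_right ?_
    rw [le_div_iff₀ hT]
    linarith

/-- convergence rate of the (greedy) Frank–Wolfe method applied to `E` over
`Σ`: the smallest FW gap after `T` iterations satisfies
`min_{k<T} g_k ≤ max(√(2n·L·(E(U₀) − E*)/(ρT)), 2(E(U₀) − E*)/T)`. -/
theorem gfw_convergence_rate (n K : ℕ)
    (Ls : Matrix (Fin n) (Fin n) ℝ) (hLs : Ls.PosSemidef)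
    (ω : Fin n → ℝ)
    (Uhat : Matrix (Fin n) (Fin K) ℝ)
    (ε : ℝ)
    (L : ℝ) (hL : 0 < L)
    (hlip : ∀ Ubar U : Matrix (Fin n) (Fin K) ℝ,
      frobNorm (gradE Ls ω Uhat ε Ubar - gradE Ls ω Uhat ε U) ≤ L * frobNorm (Ubar - U))
    (ρ : ℝ) (hρ0 : 0 < ρ)
    (T : ℕ) (hT : 1 ≤ T)
    (U S : ℕ → Matrix (Fin n) (Fin K) ℝ) (α : ℕ → ℝ) (g : ℕ → ℝ)
    (hgdef : ∀ k, g k = -frobInner (gradE Ls ω Uhat ε (U k)) (S k - U k))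
    (hUmem : ∀ k ≤ T, U k ∈ SigmaSet n K)
    (hSmem : ∀ k < T, S k ∈ SigmaSet n K)
    (hDne : ∀ k < T, S k - U k ≠ 0)
    (hgnonneg : ∀ k < T, 0 ≤ g k)
    (hα01 : ∀ k < T, α k ∈ Set.Icc (0 : ℝ) 1)
    (hαlb : ∀ k < T, min 1 (g k / (L * frobNorm (S k - U k) ^ 2)) ≤ α k)
    (hupd : ∀ k < T, U (k + 1) = U k + α k • (S k - U k))
    (hdec : ∀ k < T, ρ * min 1 (g k / (L * frobNorm (S k - U k) ^ 2)) * g k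
      ≤ En Ls ω Uhat ε (U k) - En Ls ω Uhat ε (U (k + 1)))
    (Estar : ℝ) (hEstar : IsLeast (En Ls ω Uhat ε '' SigmaSet n K) Estar) :
    (Finset.range T).inf' (Finset.nonempty_range_iff.mpr (by omega)) g
      ≤ max (Real.sqrt (2 * n * L * (En Ls ω Uhat ε (U 0) - Estar) / (ρ * T)))
          (2 * (En Ls ω Uhat ε (U 0) - Estar) / T) := by
  have hsym : Lsᵀ = Ls := (Matrix.isHermitian_iff_isSymm.1 hLs.1).eq
  have hn : 0 < n :=
    Nat.pos_of_ne_zero fun hn => hDne 0 hT (by subst hn; exact Subsingleton.elim _ _)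
  set M := (Finset.range T).inf' (Finset.nonempty_range_iff.mpr (by omega)) g
  have hM : 0 ≤ M := (Finset.le_inf'_iff _ _).2 fun k hk => hgnonneg k (Finset.mem_range.1 hk)
  have hstep : ∀ k ∈ Finset.range T, min (ρ * M ^ 2 / (2 * n * L)) (M / 2)
      ≤ En Ls ω Uhat ε (U k) - En Ls ω Uhat ε (U (k + 1)) := fun k hk => by
    have hk := Finset.mem_range.1 hk
    have hdec := hdec k hk
    rw [hupd k hk] at hdec ⊢
    exact min_le_En_sub_En_step hsym hL hlip (hUmem k hk.le) (hSmem k hk) (hDne k hk) (hgdef k)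
      hM (Finset.inf'_le g (Finset.mem_range.2 hk)) hρ0.le (hα01 k hk).2 (hαlb k hk) hdec
  have htelescope := Finset.card_nsmul_le_sum _ _ _ hstep
  rw [Finset.sum_range_sub' (fun k => En Ls ω Uhat ε (U k)), Finset.card_range, nsmul_eq_mul]
    at htelescope
  have hET : Estar ≤ En Ls ω Uhat ε (U T) := hEstar.2 ⟨U T, hUmem T le_rfl, rfl⟩
  exact le_max_sqrt_of_mul_min_le hρ0 (by positivity) (by positivity) (by linarith)
end
end
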